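/- Loop elimination: if an action sequence executable from state s reaches state t and the induced sequence of intermediate states contains a repeated state, then there exists a strictly shorter action sequence executable from s that also reaches t. -/
import Mathlib


structure StripsAction (P : Type*) where
  pre : Set P
  add : Set P
  del : Set P

def StripsAction.apply {P : Type*} (a : StripsAction P) (s : Set P) : Set P :=
  (s \ a.del) ∪ a.add

def Executable {P : Type*} : Set P → List (StripsAction P) → Prop
  | _, [] => True
  | s, a :: rest => a.pre ⊆ s ∧ Executable (a.apply s) rest

def result {P : Type*} : Set P → List (StripsAction P) → Set P
  | s, [] => s
  | s, a :: rest => result (a.apply s) rest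

def IsPlan {P : Type*} (A : Set (StripsAction P)) (I G : Set P) (π : List (StripsAction P)) : Prop :=
  (∀ a ∈ π, a ∈ A) ∧ Executable I π ∧ G ⊆ result I π


lemma result_append {P : Type*} (l1 l2 : List (StripsAction P)) (s : Set P) :
    result s (l1 ++ l2) = result (result s l1) l2 := by
  induction l1 generalizing s with
  | nil => rfl
  | cons a rest ih => simp [result, ih]

lemma executable_append {P : Type*} (l1 l2 : List (StripsAction P)) (s : Set P) :
    Executable s (l1 ++ l2) ↔ Executable s l1 ∧ Executable (result s l1) l2 := by
  induction l1 generalizing s with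
  | nil => simp [Executable, result]
  | cons a rest ih => simp [Executable, result, ih, and_assoc]

theorem loop_elimination {P : Type*}
    (π : List (StripsAction P)) (s t : Set P)
    (hexec : Executable s π) (ht : result s π = t)
    (i j : ℕ) (hij : i < j) (hj : j ≤ π.length)
    (hrep : result s (π.take i) = result s (π.take j)) :
    ∃ π' : List (StripsAction P),
      π'.length < π.length ∧ Executable s π' ∧ result s π' = t := by
  refine ⟨π.take i ++ π.drop j, ?_, ?_, ?_⟩
  · simp only [List.length_append, List.length_take, List.length_drop]
    omega
  · rw [executable_append]
    have h := hexec
    rw [← List.take_append_drop j π, executable_append] at h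
    have h2 := hexec
    rw [← List.take_append_drop i π, executable_append] at h2
    exact ⟨h2.1, hrep ▸ h.2⟩
  · rw [result_append, hrep, ← result_append, List.take_append_drop, ht]
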